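/- arXiv:2508.20456 — 5 statements merged into one kernel-verified Lean document; each statement's English description precedes it below -/
import Mathlib

section
/- For every integer d ≥ 2 and every real number φ, the Jackson kernel satisfies u_d(φ) ≥ 0. -/
open Real

/-- The Jackson damping factor `ρ_{j,d}`. -/
noncomputable def jacksonDamp (d j : ℕ) : ℝ :=
  Real.sin ((j + 1) * (π / (d + 2))) / ((d + 2) * Real.sin (π / (d + 2)))
    + (1 - (j + 1) / (d + 2)) * Real.cos (j * (π / (d + 2)))

/-- The Jackson kernel `u_d(φ) = 1/2 + Σ_{j=1}^d ρ_{j,d} cos(jφ)`. -/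
noncomputable def jacksonKernel (d : ℕ) (φ : ℝ) : ℝ :=
  1 / 2 + ∑ j ∈ Finset.Icc 1 d, jacksonDamp d j * Real.cos (j * φ)

/-!
With `α = π / (d + 2)` and `b k = sin ((k + 1) α)`, the kernel is a squared modulus:
`(d + 2) u_d(φ) = |∑_{k ≤ d} b k e^{ikφ}|²`. Expanding the square gives
`∑ b_l² + 2 ∑_j (∑_l b_{l+j} b_l) cos (jφ)`, and each autocorrelation `∑_l b_{l+j} b_l` equals
`(d + 2) / 2 · ρ_{j,d}` (with `ρ_{0,d} = 1`): by product-to-sum it reduces to a sum of cosines in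
arithmetic progression, whose closed form is evaluated using `(d + 2) α = π`.
-/

open Finset

theorem sum_range_sum_range_of_symm {M : Type*} [AddCommGroup M] (F : ℕ → ℕ → M)
    (hF : ∀ k l, F k l = F l k) (n : ℕ) :
    ∑ k ∈ range n, ∑ l ∈ range n, F k l
      = 2 • ∑ k ∈ range n, ∑ l ∈ range (k + 1), F k l - ∑ k ∈ range n, F k k := by
  induction n with
  | zero => simp
  | succ n ih =>
    simp only [sum_range_succ, sum_add_distrib, ih, smul_add, two_smul]
    rw [sum_congr rfl fun k _ => hF k n]
    abel

theorem sum_range_sum_range_succ_eq_sum_diagonals {M : Type*} [AddCommMonoid M]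
    (F : ℕ → ℕ → M) (n : ℕ) :
    ∑ k ∈ range n, ∑ l ∈ range (k + 1), F k l
      = ∑ j ∈ range n, ∑ l ∈ range (n - j), F (l + j) l := by
  rw [← sum_range_diag_flip n (fun j l => F (l + j) l)]
  refine sum_congr rfl fun k _ => ?_
  rw [← sum_range_reflect]
  refine sum_congr rfl fun l hl => ?_
  rw [mem_range] at hl
  congr 1; omega

theorem sq_sum_mul_cos_add_sq_sum_mul_sin (b : ℕ → ℝ) (n : ℕ) (φ : ℝ) :
    (∑ k ∈ range (n + 1), b k * cos (k * φ)) ^ 2 + (∑ k ∈ range (n + 1), b k * sin (k * φ)) ^ 2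
      = ∑ l ∈ range (n + 1), b l * b l
        + 2 * ∑ j ∈ Icc 1 n, (∑ l ∈ range (n + 1 - j), b (l + j) * b l) * cos (j * φ) := by
  set F : ℕ → ℕ → ℝ := fun k l => b k * b l * cos ((k - l : ℝ) * φ) with hF
  have hsymm : ∀ k l, F k l = F l k := fun k l => by
    simp only [hF, ← neg_sub (k : ℝ), neg_mul, cos_neg]; ring
  have hsq : (∑ k ∈ range (n + 1), b k * cos (k * φ)) ^ 2
      + (∑ k ∈ range (n + 1), b k * sin (k * φ)) ^ 2
      = ∑ k ∈ range (n + 1), ∑ l ∈ range (n + 1), F k l := by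
    simp only [sq, sum_mul_sum, ← sum_add_distrib, hF, sub_mul, cos_sub]
    refine sum_congr rfl fun k _ => sum_congr rfl fun l _ => by ring
  have hshift : ∀ j l : ℕ, F (l + j) l = b (l + j) * b l * cos (j * φ) := fun j l => by
    simp only [hF]; push_cast; ring_nf
  have hdiag : ∀ k, F k k = b k * b k := fun k => by simp [hF]
  rw [hsq, sum_range_sum_range_of_symm F hsymm, sum_range_sum_range_succ_eq_sum_diagonals]
  simp only [hshift, hdiag, ← sum_mul]
  rw [sum_range_succ', ← Ico_add_one_right_eq_Icc, sum_Ico_eq_sum_range]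
  simp only [add_comm 1, add_tsub_cancel_right, Nat.sub_zero, add_zero, Nat.cast_zero, zero_mul,
    cos_zero, mul_one, Nat.add_sub_add_right]
  rw [two_nsmul]
  ring

theorem sin_pi_div_nat_add_two_pos (d : ℕ) : 0 < sin (π / (d + 2)) :=
  sin_pos_of_pos_of_lt_pi (by positivity) (div_lt_self pi_pos (by linarith))

theorem jacksonDamp_zero (d : ℕ) : jacksonDamp d 0 = 1 := by
  have hα : sin (π / (d + 2)) ≠ 0 := (sin_pi_div_nat_add_two_pos d).ne'
  simp only [jacksonDamp, CharP.cast_eq_zero, zero_add, one_mul, zero_mul, cos_zero, mul_one]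
  field_simp
  ring

theorem sum_sin_mul_sin_eq_jacksonDamp (d j : ℕ) (hj : j ≤ d) :
    ∑ l ∈ range (d + 1 - j), sin ((l + j + 1) * (π / (d + 2))) * sin ((l + 1) * (π / (d + 2)))
      = (d + 2) / 2 * jacksonDamp d j := by
  set α := π / (d + 2) with hα
  have hsinα : sin α ≠ 0 := (sin_pi_div_nat_add_two_pos d).ne'
  have hπ : (d + 2) * α = π := by rw [hα]; field_simp
  have hm : ((d + 1 - j : ℕ) : ℝ) = d + 1 - j := by rw [Nat.cast_sub (by omega)]; push_cast; ring
  have hcos_sum : ∑ l ∈ range (d + 1 - j), cos (2 * α * l + (j + 2) * α)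
      = -sin ((j + 1) * α) / sin α := by
    rw [eq_div_iff hsinα, mul_comm]
    have h := sin_mul_sum_cos (d + 1 - j) (2 * α) ((j + 2) * α)
    rw [hm, mul_div_cancel_left₀ α two_ne_zero,
      show (d + 1 - j : ℝ) * (2 * α) / 2 = π - (j + 1) * α by linear_combination hπ,
      show (d + 1 - j - 1 : ℝ) * (2 * α) / 2 + (j + 2) * α = π by linear_combination hπ,
      sin_pi_sub, cos_pi] at h
    linear_combination h
  have hprod : ∀ l : ℕ, sin ((l + j + 1) * α) * sin ((l + 1) * α)
      = (cos (j * α) - cos (2 * α * l + (j + 2) * α)) / 2 := fun l => by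
    rw [eq_div_iff two_ne_zero, mul_comm, ← mul_assoc, two_mul_sin_mul_sin]
    congr 2 <;> ring
  simp only [hprod, ← sum_div, sum_sub_distrib, sum_const, card_range, nsmul_eq_mul, hm,
    hcos_sum, jacksonDamp, ← hα]
  field_simp
  ring

theorem mul_jacksonKernel_eq_sq_add_sq (d : ℕ) (φ : ℝ) :
    (d + 2) * jacksonKernel d φ
      = (∑ k ∈ range (d + 1), sin ((k + 1) * (π / (d + 2))) * cos (k * φ)) ^ 2
        + (∑ k ∈ range (d + 1), sin ((k + 1) * (π / (d + 2))) * sin (k * φ)) ^ 2 := by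
  set b : ℕ → ℝ := fun k => sin ((k + 1) * (π / (d + 2))) with hb
  have hcorr : ∀ j ≤ d,
      ∑ l ∈ range (d + 1 - j), b (l + j) * b l = (d + 2) / 2 * jacksonDamp d j := fun j hj => by
    rw [← sum_sin_mul_sin_eq_jacksonDamp d j hj]
    push_cast [hb]
    rfl
  have hdiag := hcorr 0 (Nat.zero_le d)
  simp only [add_zero, Nat.sub_zero, jacksonDamp_zero, mul_one] at hdiag
  rw [sq_sum_mul_cos_add_sq_sum_mul_sin, hdiag,
    sum_congr rfl fun j hj => by rw [hcorr j (mem_Icc.mp hj).2],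
    jacksonKernel, mul_add, mul_sum, mul_sum]
  congr 1
  · ring
  · exact sum_congr rfl fun j _ => by ring

theorem jacksonKernel_nonneg_general (d : ℕ) (φ : ℝ) :
    0 ≤ jacksonKernel d φ := by
  have hsq := mul_jacksonKernel_eq_sq_add_sq d φ
  have hpos : (0 : ℝ) < d + 2 := by positivity
  exact nonneg_of_mul_nonneg_right (by rw [hsq]; positivity) hpos

/-- for every `d ≥ 2` and every real `φ`, `u_d(φ) ≥ 0`. -/
theorem jacksonKernel_nonneg (d : ℕ) (hd : 2 ≤ d) (φ : ℝ) :
    0 ≤ jacksonKernel d φ :=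
  jacksonKernel_nonneg_general d φ
end

section
/- Suppose B = (x_i, …, x_{i+ℓ−1})^T V ∈ ℝ^{ℓ×ℓ} is nonsingular. Then v_i := V B^{−1} e_1 (e_1 the first standard basis vector of ℝ^ℓ) is the unique vector v in the column space of V satisfying x_i^T v = 1 and x_j^T v = 0 for j = i+1, …, i+ℓ−1, and for every real polynomial p of degree at most M − 1 with F_d(p)(λ_i) ≠ 0, tan∠(R(S), x_i) ≤ max_{j ∈ N_i} (|F_d(p)(λ_j)| / |F_d(p)(λ_i)|) · tan∠(v_i, x_i), where N_i = {1, 2, …, n} \ {i, …, i+ℓ−1}. -/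
open Real

/-- The step function `h` associated with the interval `[a, b]`:
`h(t) = 1` on `(a,b)`, `h(a) = h(b) = 1/2`, and `h(t) = 0` elsewhere. -/
noncomputable def stepFun (a b t : ℝ) : ℝ :=
  if t = a ∨ t = b then 1 / 2 else if t ∈ Set.Ioo a b then 1 else 0

/-- The degree-`j` Chebyshev polynomial of the first kind (real coefficients). -/
noncomputable def chebT (j : ℕ) : Polynomial ℝ := Polynomial.Chebyshev.T ℝ j

/-- The Chebyshev coefficient `c_j = (2/π)·∫_a^b p(t)·T_j(t)/√(1−t²) dt`. -/
noncomputable def chebCoef (a b : ℝ) (p : Polynomial ℝ) (j : ℕ) : ℝ :=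
  (2 / π) * ∫ t in a..b, p.eval t * (chebT j).eval t / Real.sqrt (1 - t ^ 2)

/-- The Chebyshev–Jackson series approximation of `p·h`, as a polynomial:
`F_d(p) = c_0/2 + Σ_{j=1}^d ρ_{j,d}·c_j·T_j`. -/
noncomputable def FdPoly (d : ℕ) (a b : ℝ) (p : Polynomial ℝ) : Polynomial ℝ :=
  Polynomial.C (chebCoef a b p 0 / 2) +
    ∑ j ∈ Finset.Icc 1 d, Polynomial.C (jacksonDamp d j * chebCoef a b p j) * chebT j

/-- `‖f‖_{L∞(s,t)} = sup_{x ∈ (s,t)} |f(x)|`. -/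
noncomputable def supAbs (f : ℝ → ℝ) (s t : ℝ) : ℝ :=
  sSup ((fun x => |f x|) '' Set.Ioo s t)

/-- `μ` is an eigenvalue of the matrix `A`. -/
def IsEigOf {n : ℕ} (A : Matrix (Fin n) (Fin n) ℝ) (μ : ℝ) : Prop :=
  ∃ v : Fin n → ℝ, v ≠ 0 ∧ A.mulVec v = μ • v

/-- `tan∠(u, x) = ‖u − (xᵀu)x‖ / |xᵀu|` (Euclidean norm). -/
noncomputable def tanAngle {n : ℕ} (u x : Fin n → ℝ) : ℝ :=
  Real.sqrt (dotProduct (u - dotProduct x u • x)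
      (u - dotProduct x u • x)) / |dotProduct x u|

/-! In the orthonormal eigenbasis, `x_jᵀ q(A) v = q(λ_j) · x_jᵀ v` for every polynomial `q`.
Since `F_d` is linear, `q = F_d(p)` is a combination of the `F_d(t^k)`, so `q(A) v_i ∈ R(S)`.
The block coordinates of `v_i` vanish except `x_iᵀ v_i = 1`; hence, relative to the
`x_i`-coordinate, every other coordinate of `q(A) v_i` is that of `v_i` times `q(λ_j)/q(λ_i)` with
`j ∈ N_i`, and Parseval turns this into the bound on tangents. The characterisation of `v_i` is
`B w = e_1`, as `B w` lists the block coordinates of `V w`. -/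

open Matrix Polynomial

section Orthonormal

variable {ι : Type*} [Fintype ι] [DecidableEq ι] {x : ι → ι → ℝ}

theorem sum_dotProduct_smul_eq_self (horth : ∀ j k, x j ⬝ᵥ x k = if j = k then 1 else 0)
    (v : ι → ℝ) : ∑ j, (x j ⬝ᵥ v) • x j = v := by
  have hXXt : of x * (of x)ᵀ = 1 := by
    ext j k
    simpa [mul_apply, one_apply, dotProduct] using horth j k
  calc ∑ j, (x j ⬝ᵥ v) • x j = (of x)ᵀ *ᵥ (of x *ᵥ v) := by
        ext m
        simp [mulVec, dotProduct, Finset.sum_apply, mul_comm]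
    _ = v := by rw [mulVec_mulVec, mul_eq_one_comm.mp hXXt, one_mulVec]

theorem dotProduct_sum_smul (horth : ∀ j k, x j ⬝ᵥ x k = if j = k then 1 else 0)
    (c : ι → ℝ) (k : ι) : x k ⬝ᵥ ∑ j, c j • x j = c k := by
  simp [dotProduct_sum, dotProduct_smul, horth]

theorem dotProduct_self_eq_sum_sq (horth : ∀ j k, x j ⬝ᵥ x k = if j = k then 1 else 0)
    (v : ι → ℝ) : v ⬝ᵥ v = ∑ j, (x j ⬝ᵥ v) ^ 2 := by
  conv_lhs => rw [← sum_dotProduct_smul_eq_self horth v]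
  simp [sum_dotProduct, sq, dotProduct_sum_smul horth]

theorem aeval_mulVec_of_mulVec_eq_smul {A : Matrix ι ι ℝ} {v : ι → ℝ} {μ : ℝ}
    (h : A *ᵥ v = μ • v) (q : ℝ[X]) : aeval A q *ᵥ v = q.eval μ • v := by
  have h' : toLinAlgEquiv' A v = μ • v := by rwa [toLinAlgEquiv'_apply]
  rw [← toLinAlgEquiv'_apply, ← aeval_algHom_apply (toLinAlgEquiv' (R := ℝ) (n := ι)),
    Module.End.aeval_apply_of_mem_apply_eq_smul h']

theorem dotProduct_aeval_mulVec (horth : ∀ j k, x j ⬝ᵥ x k = if j = k then 1 else 0)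
    {A : Matrix ι ι ℝ} {lam : ι → ℝ} (heig : ∀ j, A *ᵥ x j = lam j • x j) (q : ℝ[X])
    (v : ι → ℝ) (k : ι) : x k ⬝ᵥ (aeval A q *ᵥ v) = q.eval (lam k) * (x k ⬝ᵥ v) := by
  conv_lhs => rw [← sum_dotProduct_smul_eq_self horth v]
  simp only [mulVec_sum, mulVec_smul, aeval_mulVec_of_mulVec_eq_smul (heig _), smul_smul]
  rw [dotProduct_sum_smul horth, mul_comm]

end Orthonormal

section TanAngle

variable {n : ℕ} {x : Fin n → Fin n → ℝ}

theorem tanAngle_nonneg (u y : Fin n → ℝ) : 0 ≤ tanAngle u y := by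
  unfold tanAngle
  positivity

theorem tanAngle_eq_sqrt_sum_div (horth : ∀ j k, x j ⬝ᵥ x k = if j = k then 1 else 0)
    (u : Fin n → ℝ) (i : Fin n) :
    tanAngle u (x i) = √(∑ j ∈ Finset.univ.erase i, (x j ⬝ᵥ u) ^ 2) / |x i ⬝ᵥ u| := by
  have hcoord : ∀ j, x j ⬝ᵥ (u - (x i ⬝ᵥ u) • x i) = if j = i then 0 else x j ⬝ᵥ u := by
    intro j
    simp only [dotProduct_sub, dotProduct_smul, horth, smul_eq_mul]
    split_ifs with h <;> simp [h]
  rw [tanAngle, dotProduct_self_eq_sum_sq horth, ← Finset.sum_erase (a := i)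
    (f := fun j => (x j ⬝ᵥ (u - (x i ⬝ᵥ u) • x i)) ^ 2) _ (by simp [hcoord])]
  congr 2
  exact Finset.sum_congr rfl fun j hj => by rw [hcoord, if_neg (Finset.ne_of_mem_erase hj)]

theorem tanAngle_aeval_mulVec_le (horth : ∀ j k, x j ⬝ᵥ x k = if j = k then 1 else 0)
    {A : Matrix (Fin n) (Fin n) ℝ} {lam : Fin n → ℝ} (heig : ∀ j, A *ᵥ x j = lam j • x j)
    {q : ℝ[X]} {v : Fin n → ℝ} {i : Fin n} {K : ℝ} (hK : 0 ≤ K) (hqi : q.eval (lam i) ≠ 0)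
    (hbound : ∀ j ≠ i, x j ⬝ᵥ v = 0 ∨ |q.eval (lam j)| ≤ K * |q.eval (lam i)|) :
    tanAngle (aeval A q *ᵥ v) (x i) ≤ K * tanAngle v (x i) := by
  set S := ∑ j ∈ Finset.univ.erase i, (x j ⬝ᵥ v) ^ 2
  have hsum : ∑ j ∈ Finset.univ.erase i, (q.eval (lam j) * (x j ⬝ᵥ v)) ^ 2
      ≤ (K * |q.eval (lam i)|) ^ 2 * S := by
    rw [Finset.mul_sum]
    refine Finset.sum_le_sum fun j hj => ?_
    rcases hbound j (Finset.ne_of_mem_erase hj) with h0 | hle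
    · simp [h0]
    · rw [mul_pow, ← sq_abs (q.eval _)]
      gcongr
  have hsqrt : √(∑ j ∈ Finset.univ.erase i, (q.eval (lam j) * (x j ⬝ᵥ v)) ^ 2)
      ≤ K * |q.eval (lam i)| * √S := by
    calc _ ≤ √((K * |q.eval (lam i)|) ^ 2 * S) := Real.sqrt_le_sqrt hsum
      _ = K * |q.eval (lam i)| * √S := by
        rw [Real.sqrt_mul (sq_nonneg _), Real.sqrt_sq (by positivity)]
  simp only [tanAngle_eq_sqrt_sum_div horth, dotProduct_aeval_mulVec horth heig, abs_mul]
  calc _ ≤ K * |q.eval (lam i)| * √S / (|q.eval (lam i)| * |x i ⬝ᵥ v|) := by gcongr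
    _ = K * (√S / |x i ⬝ᵥ v|) := by
      have := abs_ne_zero.mpr hqi
      field_simp

end TanAngle

theorem intervalIntegrable_div_sqrt_one_sub_sq {a b : ℝ} (ha : -1 < a) (hab : a ≤ b)
    (hb : b < 1) {f : ℝ → ℝ} (hf : Continuous f) :
    IntervalIntegrable (fun t => f t / √(1 - t ^ 2)) MeasureTheory.volume a b := by
  refine (hf.continuousOn.div (by fun_prop) fun t ht => ?_).intervalIntegrable
  rw [Set.uIcc_of_le hab] at ht
  have : 0 < 1 - t ^ 2 := by nlinarith [ht.1, ht.2]
  positivity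

theorem chebCoef_add {a b : ℝ} (ha : -1 < a) (hab : a ≤ b) (hb : b < 1) (p q : ℝ[X]) (j : ℕ) :
    chebCoef a b (p + q) j = chebCoef a b p j + chebCoef a b q j := by
  have hint : ∀ r : ℝ[X], IntervalIntegrable
      (fun t => r.eval t * (chebT j).eval t / √(1 - t ^ 2)) MeasureTheory.volume a b :=
    fun r => intervalIntegrable_div_sqrt_one_sub_sq ha hab hb (by fun_prop)
  simp only [chebCoef, ← mul_add, ← intervalIntegral.integral_add (hint p) (hint q),
    eval_add, add_mul, add_div]

theorem chebCoef_smul (a b c : ℝ) (p : ℝ[X]) (j : ℕ) :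
    chebCoef a b (c • p) j = c * chebCoef a b p j := by
  simp only [chebCoef, eval_smul, smul_eq_mul, mul_assoc, mul_div_assoc,
    intervalIntegral.integral_const_mul]
  ring

theorem isLinearMap_FdPoly (d : ℕ) {a b : ℝ} (ha : -1 < a) (hab : a ≤ b) (hb : b < 1) :
    IsLinearMap ℝ (FdPoly d a b) where
  map_add p q := by
    simp only [FdPoly, chebCoef_add ha hab hb, add_div, mul_add, C_add, add_mul,
      Finset.sum_add_distrib]
    ring
  map_smul c p := by
    simp only [FdPoly, chebCoef_smul]
    simp only [smul_add, Finset.smul_sum, smul_eq_C_mul, ← mul_assoc, ← C_mul]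
    congr 3
    · ring
    · ext1 j; congr 2; ring

theorem FdPoly_mem_span_FdPoly_X_pow (d : ℕ) {a b : ℝ} (ha : -1 < a) (hab : a ≤ b) (hb : b < 1)
    {p : ℝ[X]} {M : ℕ} (hp : p.natDegree < M) :
    FdPoly d a b p ∈ Submodule.span ℝ ((fun k => FdPoly d a b (X ^ k)) '' Set.Iio M) := by
  classical
  have hmem : p ∈ degreeLT ℝ M :=
    mem_degreeLT.mpr (degree_le_natDegree.trans_lt (by exact_mod_cast hp))
  rw [degreeLT_eq_span_X_pow] at hmem
  have := Submodule.apply_mem_span_image_of_mem_span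
    (IsLinearMap.mk' _ (isLinearMap_FdPoly d ha hab hb)) hmem
  simpa [Set.image_image] using this

theorem aeval_mulVec_mulVec_mem_span {ι κ α : Type*} [Fintype ι] [DecidableEq ι] [Fintype κ]
    (A : Matrix ι ι ℝ) (V : Matrix ι κ ℝ) (w : κ → ℝ) {f : α → ℝ[X]} {s : Set α} {q : ℝ[X]}
    (hq : q ∈ Submodule.span ℝ (f '' s)) :
    aeval A q *ᵥ (V *ᵥ w) ∈
      Submodule.span ℝ {u | ∃ k ∈ s, ∃ c, u = aeval A (f k) *ᵥ fun m => V m c} := by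
  induction hq using Submodule.span_induction with
  | mem r hr =>
    obtain ⟨k, hk, rfl⟩ := hr
    have hV : V *ᵥ w = ∑ c, w c • fun m => V m c := by
      ext m
      simp [mulVec, dotProduct, Finset.sum_apply, mul_comm]
    rw [hV, mulVec_sum]
    exact Submodule.sum_mem _ fun c _ => by
      rw [mulVec_smul]
      exact Submodule.smul_mem _ _ (Submodule.subset_span ⟨k, hk, c, rfl⟩)
  | zero => simp
  | add r t _ _ hr ht =>
    rw [map_add, add_mulVec]
    exact Submodule.add_mem _ hr ht
  | smul c r _ hr =>
    rw [map_smul, smul_mulVec]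
    exact Submodule.smul_mem _ c hr

theorem of_dotProduct_col_mulVec {ι κ ρ : Type*} [Fintype ι] [Fintype κ] (y : ρ → ι → ℝ)
    (V : Matrix ι κ ℝ) (w : κ → ℝ) :
    (of fun r c => y r ⬝ᵥ fun m => V m c) *ᵥ w = fun r => y r ⬝ᵥ (V *ᵥ w) := by
  ext r
  simp [mulVec, dotProduct, Finset.mul_sum, Finset.sum_mul, Finset.sum_comm (γ := κ), mul_assoc]

theorem mulVec_eq_iff_eq_inv_mulVec {κ R : Type*} [Fintype κ] [DecidableEq κ] [CommRing R]
    {B : Matrix κ κ R} (hB : IsUnit B) {w e : κ → R} : B *ᵥ w = e ↔ w = B⁻¹ *ᵥ e := by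
  have hdet := (isUnit_iff_isUnit_det B).mp hB
  constructor
  · rintro rfl
    rw [mulVec_mulVec, nonsing_inv_mul B hdet, one_mulVec]
  · rintro rfl
    rw [mulVec_mulVec, mul_nonsing_inv B hdet, one_mulVec]

theorem shifted_eq_single_zero_iff {n ℓ i : ℕ} (hℓ : 0 < ℓ) (hin : i + ℓ ≤ n) (y : Fin n → ℝ) :
    (fun r : Fin ℓ => y ⟨i + r.1, by have := r.2; omega⟩) = Pi.single ⟨0, hℓ⟩ 1 ↔
      y ⟨i, by omega⟩ = 1 ∧ ∀ (j : ℕ) (_ : i < j) (_ : j < i + ℓ), y ⟨j, by omega⟩ = 0 := by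
  constructor
  · intro h
    refine ⟨by simpa using congrFun h ⟨0, hℓ⟩, fun j hij hjl => ?_⟩
    have hj : (⟨i + (j - i), by omega⟩ : Fin n) = ⟨j, by omega⟩ := Fin.ext (by simp; omega)
    simpa [hj, Fin.ext_iff, show j - i ≠ 0 by omega] using congrFun h ⟨j - i, by omega⟩
  · rintro ⟨h0, hpos⟩
    ext ⟨r, hr⟩
    cases r with
    | zero => simpa using h0
    | succ r =>
      rw [Pi.single_eq_of_ne (by simp [Fin.ext_iff])]
      exact hpos (i + (r + 1)) (by omega) (by omega)

theorem block_coords_mulVec_eq_single_iff {n ℓ i : ℕ} (hℓ : 0 < ℓ) (hin : i + ℓ ≤ n)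
    (x : Fin n → Fin n → ℝ) (V : Matrix (Fin n) (Fin ℓ) ℝ) {B : Matrix (Fin ℓ) (Fin ℓ) ℝ}
    (hB : B = of fun r c => x ⟨i + r.1, by have := r.2; omega⟩ ⬝ᵥ fun m => V m c)
    (hBns : IsUnit B) (w : Fin ℓ → ℝ) :
    (x ⟨i, by omega⟩ ⬝ᵥ V *ᵥ w = 1 ∧
      ∀ (j : ℕ) (_ : i < j) (_ : j < i + ℓ), x ⟨j, by omega⟩ ⬝ᵥ V *ᵥ w = 0) ↔
      w = B⁻¹ *ᵥ Pi.single ⟨0, hℓ⟩ 1 := by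
  rw [← shifted_eq_single_zero_iff hℓ hin (x · ⬝ᵥ V *ᵥ w), ← mulVec_eq_iff_eq_inv_mulVec hBns,
    hB, of_dotProduct_col_mulVec]

/-- Indices are 0-based: the block is `{i, …, i+ℓ−1}` with `i + ℓ ≤ n`, and `tan∠(R(S), x_i)`
is the infimum over `u ∈ R(S)` with `x_iᵀu ≠ 0`, since `tan∠(u, x_i) = +∞` for the others. -/
theorem tanAngle_colSpace_bound (d : ℕ) (a b : ℝ)
    (ha : -1 < a) (hab : a < b) (hb : b < 1)
    (n M ℓ i : ℕ) (hM : 1 ≤ M) (hℓ : 0 < ℓ) (hin : i + ℓ ≤ n)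
    (A : Matrix (Fin n) (Fin n) ℝ)
    (lam : Fin n → ℝ) (x : Fin n → Fin n → ℝ)
    (heig : ∀ j, A.mulVec (x j) = lam j • x j)
    (horth : ∀ j k, dotProduct (x j) (x k) = if j = k then (1 : ℝ) else 0)
    (V : Matrix (Fin n) (Fin ℓ) ℝ)
    (B : Matrix (Fin ℓ) (Fin ℓ) ℝ)
    (hB : B = Matrix.of fun r c =>
      dotProduct (x ⟨i + r.1, by have := r.2; omega⟩) (fun m => V m c))
    (hBns : IsUnit B)
    (vi : Fin n → ℝ)
    (hvi : vi = V.mulVec (B⁻¹.mulVec (Pi.single ⟨0, hℓ⟩ 1)))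
    (RS : Submodule ℝ (Fin n → ℝ))
    (hRS : RS = Submodule.span ℝ {u | ∃ k < M, ∃ c : Fin ℓ,
      u = ((Polynomial.aeval A) (FdPoly d a b (Polynomial.X ^ k))).mulVec
        (fun m => V m c)}) :
    (dotProduct (x ⟨i, by omega⟩) vi = 1 ∧
      (∀ (j : ℕ) (_hj1 : i < j) (_hj2 : j < i + ℓ), dotProduct (x ⟨j, by omega⟩) vi = 0) ∧
      (∀ v : Fin n → ℝ, (∃ w : Fin ℓ → ℝ, v = V.mulVec w) →
        dotProduct (x ⟨i, by omega⟩) v = 1 →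
        (∀ (j : ℕ) (_hj1 : i < j) (_hj2 : j < i + ℓ), dotProduct (x ⟨j, by omega⟩) v = 0) →
        v = vi)) ∧
    (∀ p : Polynomial ℝ, p.natDegree ≤ M - 1 →
      (FdPoly d a b p).eval (lam ⟨i, by omega⟩) ≠ 0 →
      sInf {r : ℝ | ∃ u ∈ RS, dotProduct (x ⟨i, by omega⟩) u ≠ 0 ∧
          r = tanAngle u (x ⟨i, by omega⟩)} ≤
        sSup ((fun j : Fin n => |(FdPoly d a b p).eval (lam j)| /
            |(FdPoly d a b p).eval (lam ⟨i, by omega⟩)|) '' {j | j.1 < i ∨ i + ℓ ≤ j.1}) *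
          tanAngle vi (x ⟨i, by omega⟩)) := by
  have hcoords := block_coords_mulVec_eq_single_iff hℓ hin x V hB hBns
  obtain ⟨hvi_one, hvi_zero⟩ := hvi ▸ (hcoords _).mpr rfl
  refine ⟨⟨hvi_one, hvi_zero, ?_⟩, ?_⟩
  · rintro v ⟨w, rfl⟩ h_one h_zero
    rw [hvi, (hcoords w).mp ⟨h_one, h_zero⟩]
  intro p hp hqi
  set q := FdPoly d a b p
  set K := sSup ((fun j : Fin n => |q.eval (lam j)| / |q.eval (lam ⟨i, by omega⟩)|) ''
    {j | j.1 < i ∨ i + ℓ ≤ j.1})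
  have hK : 0 ≤ K := Real.sSup_nonneg (by rintro _ ⟨j, -, rfl⟩; positivity)
  have hle_K (j : Fin n) (hj : j.1 < i ∨ i + ℓ ≤ j.1) :
      |q.eval (lam j)| ≤ K * |q.eval (lam ⟨i, by omega⟩)| :=
    (div_le_iff₀ (abs_pos.mpr hqi)).mp
      (le_csSup ((Set.toFinite _).image _).bddAbove ⟨j, hj, rfl⟩)
  have hu : aeval A q *ᵥ vi ∈ RS := by
    rw [hRS, hvi]
    exact aeval_mulVec_mulVec_mem_span A V _
      (FdPoly_mem_span_FdPoly_X_pow d ha hab.le hb (by omega))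
  have hxu : x ⟨i, by omega⟩ ⬝ᵥ aeval A q *ᵥ vi ≠ 0 := by
    rwa [dotProduct_aeval_mulVec horth heig, hvi_one, mul_one]
  refine le_trans (csInf_le ⟨0, ?_⟩ ?_)
    (tanAngle_aeval_mulVec_le horth heig hK hqi fun j hji => ?_)
  · rintro _ ⟨u, -, -, rfl⟩
    exact tanAngle_nonneg _ _
  · exact ⟨_, hu, hxu, rfl⟩
  by_cases hj : j.1 < i ∨ i + ℓ ≤ j.1
  · exact Or.inr (hle_K j hj)
  · have : j.1 ≠ i := fun h => hji (Fin.ext h)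
    exact Or.inl (hvi_zero j.1 (by omega) (by omega))
end

section
/- There exists a real polynomial p of degree at most M − 1 with p(λ_i) ≠ 0 such that max over j ∈ {1, …, n_ev} \ {i, …, i+ℓ−1} of |p(λ_j)| / |p(λ_i)| is at most ε_i, where ε_i = κ_i / T_{M−|Ξ_i|−1}(σ_i) if 1 ≤ i ≤ n_ev − ℓ and ε_i = 0 if n_ev − ℓ + 1 ≤ i ≤ n_ev. -/
/-!
Multiply the node polynomial `m_i`, which kills `λ_1, …, λ_{i-1}`, by the Chebyshev polynomial
`T_{M-|Ξ_i|-1}` transported by the affine map sending `[a, λ_{i+ℓ}]` onto `[-1, 1]`. The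
Chebyshev factor is bounded by `1` at every `λ_j` with `j ≥ i + ℓ`, and equals `T(σ_i) ≥ 1` at
`λ_i`, since the affine map sends `λ_i ≥ λ_{i+ℓ}` to `σ_i ≥ 1`. When `i > n_ev - ℓ` there is no
such `j`, and `m_i` alone already vanishes at every other index.
-/

open Real Polynomial

lemma abs_le_supAbs {f : ℝ → ℝ} (hf : Continuous f) {a b : ℝ} (hab : a < b) {t : ℝ}
    (ht : t ∈ Set.Icc a b) : |f t| ≤ supAbs f a b := by
  have hbdd : BddAbove ((fun x => |f x|) '' Set.Ioo a b) :=
    ((isCompact_Icc.image (continuous_abs.comp hf)).bddAbove).mono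
      (Set.image_mono Set.Ioo_subset_Icc_self)
  have hclosed : IsClosed {x | |f x| ≤ supAbs f a b} :=
    isClosed_le (continuous_abs.comp hf) continuous_const
  rw [← closure_Ioo hab.ne] at ht
  exact hclosed.closure_subset_iff.mpr (fun x hx => le_csSup hbdd ⟨x, hx, rfl⟩) ht

lemma eval_prod_X_sub_C_eq_zero_iff {R : Type*} [CommRing R] [IsDomain R] {s : Finset R}
    {x : R} : (∏ μ ∈ s, (X - C μ)).eval x = 0 ↔ x ∈ s := by
  simp [eval_prod, Finset.prod_eq_zero_iff, sub_eq_zero]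

namespace Polynomial.Chebyshev

/-- `T_n` composed with the affine map sending `a ↦ -1` and `c ↦ 1`. -/
noncomputable def shiftedT (n : ℤ) (a c : ℝ) : ℝ[X] :=
  (T ℝ n).comp (1 + Polynomial.C (2 / (c - a)) * (X - Polynomial.C c))

variable {a c : ℝ}

lemma eval_shiftedT (n : ℤ) (t : ℝ) :
    (shiftedT n a c).eval t = (T ℝ n).eval (1 + 2 * (t - c) / (c - a)) := by
  simp only [shiftedT, eval_comp, eval_add, eval_one, eval_mul, eval_sub, eval_C, eval_X]
  ring_nf

lemma natDegree_shiftedT_le (n : ℤ) : (shiftedT n a c).natDegree ≤ n.natAbs := by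
  have haff : (1 + Polynomial.C (2 / (c - a)) * (X - Polynomial.C c)).natDegree ≤ 1 := by
    refine (natDegree_add_le _ _).trans (max_le (by simp) ?_)
    exact natDegree_C_mul_le _ _ |>.trans (natDegree_X_sub_C c).le
  calc (shiftedT n a c).natDegree ≤ (T ℝ n).natDegree * 1 :=
        natDegree_comp_le.trans (Nat.mul_le_mul_left _ haff)
    _ = n.natAbs := by simp

lemma abs_eval_shiftedT_le_one (n : ℤ) (hac : a < c) {t : ℝ} (ht : t ∈ Set.Icc a c) :
    |(shiftedT n a c).eval t| ≤ 1 := by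
  rw [eval_shiftedT]
  refine abs_eval_T_real_le_one n (abs_le.mpr ⟨?_, ?_⟩)
  · have : -2 ≤ 2 * (t - c) / (c - a) := by rw [le_div_iff₀ (sub_pos.mpr hac)]; linarith [ht.1]
    linarith
  · have : 2 * (t - c) / (c - a) ≤ 0 :=
      div_nonpos_of_nonpos_of_nonneg (by linarith [ht.2]) (sub_pos.mpr hac).le
    linarith

lemma one_le_eval_shiftedT (n : ℤ) (hac : a < c) {t : ℝ} (ht : c ≤ t) :
    1 ≤ (shiftedT n a c).eval t := by
  rw [eval_shiftedT]
  refine one_le_eval_T_real n ?_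
  have : 0 ≤ 2 * (t - c) / (c - a) := div_nonneg (by linarith) (sub_pos.mpr hac).le
  linarith

lemma abs_eval_mul_shiftedT_div_le {m : ℝ[X]} {a b c x y : ℝ} (n : ℤ) (hac : a < c)
    (hcb : c ≤ b) (hcx : c ≤ x) (hy : y ∈ Set.Icc a c ∨ m.eval y = 0) :
    |(m * shiftedT n a c).eval y| / |(m * shiftedT n a c).eval x| ≤
      supAbs (fun t => m.eval t) a b / |m.eval x| / (T ℝ n).eval (1 + 2 * (x - c) / (c - a)) := by
  have hS : ∀ t ∈ Set.Icc a b, |m.eval t| ≤ supAbs (fun t => m.eval t) a b :=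
    fun t ht => abs_le_supAbs m.continuous (hac.trans_le hcb) ht
  have hTx := one_le_eval_shiftedT n hac hcx
  rw [← eval_shiftedT, div_div, eval_mul, eval_mul, abs_mul, abs_mul,
    abs_of_pos (zero_lt_one.trans_le hTx)]
  refine div_le_div_of_nonneg_right ?_ (by positivity)
  rcases hy with hy | hy
  · exact (mul_le_of_le_one_right (abs_nonneg _) (abs_eval_shiftedT_le_one n hac hy)).trans
      (hS y ⟨hy.1, hy.2.trans hcb⟩)
  · rw [hy, abs_zero, zero_mul]
    exact (abs_nonneg _).trans (hS a ⟨le_rfl, (hac.trans_le hcb).le⟩)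

end Polynomial.Chebyshev

theorem exists_poly_ratio_bound_general (a b : ℝ)
    (nev ℓ M : ℕ)
    (lam : ℕ → ℝ)
    (hmono : ∀ j k, 1 ≤ j → j ≤ k → k ≤ nev → lam k ≤ lam j)
    (hub : lam 1 ≤ b) (hlb : a ≤ lam nev)
    (i : ℕ) (hi1 : 1 ≤ i) (hi2 : i ≤ nev)
    (Xi : Finset ℝ) (hXi : Xi = (Finset.Icc 1 (i - 1)).image lam)
    (hsep : 1 < i → lam (i - 1) ≠ lam i)
    (hcard : Xi.card ≤ M - 1)
    (hgap : i ≤ nev - ℓ → a < lam (i + ℓ))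
    (mi : Polynomial ℝ) (hmi : mi = ∏ μ ∈ Xi, (X - C μ))
    (κ : ℝ) (hκ : κ = supAbs (fun t => mi.eval t) a b / |mi.eval (lam i)|)
    (ε : ℝ)
    (hε : ε = if i ≤ nev - ℓ then
        κ / (Polynomial.Chebyshev.T ℝ ((M - Xi.card - 1 : ℕ) : ℤ)).eval
          (1 + 2 * (lam i - lam (i + ℓ)) / (lam (i + ℓ) - a))
      else 0) :
    ∃ p : Polynomial ℝ, p.natDegree ≤ M - 1 ∧ p.eval (lam i) ≠ 0 ∧
      ∀ j, 1 ≤ j → j ≤ nev → (j < i ∨ i + ℓ ≤ j) →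
        |p.eval (lam j)| / |p.eval (lam i)| ≤ ε := by
  have hroot : ∀ t, mi.eval t = 0 ↔ t ∈ Xi := fun t => hmi ▸ eval_prod_X_sub_C_eq_zero_iff
  have hvanish : ∀ j, 1 ≤ j → j < i → mi.eval (lam j) = 0 := fun j hj1 hj2 =>
    (hroot _).2 (hXi ▸ Finset.mem_image_of_mem lam (Finset.mem_Icc.2 ⟨hj1, by omega⟩))
  have hne : mi.eval (lam i) ≠ 0 := by
    rw [Ne, hroot, hXi, Finset.mem_image]
    rintro ⟨j, hj, hji⟩
    rw [Finset.mem_Icc] at hj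
    have := hmono j (i - 1) hj.1 hj.2 (by omega)
    have := hmono (i - 1) i (by omega) (by omega) hi2
    exact hsep (by omega) (by linarith)
  have hdeg : mi.natDegree = Xi.card := hmi ▸ natDegree_finsetProd_X_sub_C_eq_card Xi id
  split_ifs at hε with hcase
  · have hac : a < lam (i + ℓ) := hgap hcase
    have hci : lam (i + ℓ) ≤ lam i := hmono i (i + ℓ) hi1 (by omega) (by omega)
    have hcb : lam (i + ℓ) ≤ b := (hmono 1 (i + ℓ) le_rfl (by omega) (by omega)).trans hub
    refine ⟨mi * Chebyshev.shiftedT (M - Xi.card - 1 : ℕ) a (lam (i + ℓ)), ?_, ?_, ?_⟩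
    · have := Chebyshev.natDegree_shiftedT_le (a := a) (c := lam (i + ℓ)) (M - Xi.card - 1 : ℕ)
      exact natDegree_mul_le.trans (by omega)
    · rw [eval_mul]
      exact mul_ne_zero hne (zero_lt_one.trans_le (Chebyshev.one_le_eval_shiftedT _ hac hci)).ne'
    · intro j hj1 hj2 hj
      rw [hε, hκ]
      refine Chebyshev.abs_eval_mul_shiftedT_div_le _ hac hcb hci ?_
      rcases hj with hj | hj
      · exact Or.inr (hvanish j hj1 hj)
      · exact Or.inl ⟨hlb.trans (hmono j nev hj1 hj2 le_rfl), hmono (i + ℓ) j (by omega) hj hj2⟩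
  · refine ⟨mi, hdeg ▸ hcard, hne, fun j hj1 hj2 hj => ?_⟩
    rw [hε, hvanish j hj1 (by omega), abs_zero, zero_div]

/-- with `b ≥ λ_1 ≥ ⋯ ≥ λ_{n_ev} ≥ a`, no value repeated more than `ℓ` times,
`Ξ_i` the set of distinct values among `λ_1, …, λ_{i−1}` (with `|Ξ_i| ≤ M−1` and
`λ_{i−1} ≠ λ_i` for `i > 1`), `m_i(t) = Π_{λ∈Ξ_i}(t−λ)`, `κ_i = ‖m_i‖_{L∞(a,b)}/|m_i(λ_i)|`,
and (for `i ≤ n_ev−ℓ`, where `λ_{i+ℓ} > a`) `σ_i = 1 + 2(λ_i−λ_{i+ℓ})/(λ_{i+ℓ}−a)` and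
`ε_i = κ_i / T_{M−|Ξ_i|−1}(σ_i)` (`ε_i = 0` for `i > n_ev−ℓ`), there exists a real polynomial
`p` of degree at most `M−1` with `p(λ_i) ≠ 0` such that
`max_{1 ≤ j ≤ n_ev, j ∉ {i,…,i+ℓ−1}} |p(λ_j)|/|p(λ_i)| ≤ ε_i`. -/
theorem exists_poly_ratio_bound (a b : ℝ) (hab : a < b)
    (nev ℓ M : ℕ) (hnev : 1 ≤ nev) (hℓ : 1 ≤ ℓ) (hM : 1 ≤ M)
    (lam : ℕ → ℝ)
    (hmono : ∀ j k, 1 ≤ j → j ≤ k → k ≤ nev → lam k ≤ lam j)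
    (hub : lam 1 ≤ b) (hlb : a ≤ lam nev)
    (hmult : ∀ t : ℝ, ((Finset.Icc 1 nev).filter fun j => lam j = t).card ≤ ℓ)
    (i : ℕ) (hi1 : 1 ≤ i) (hi2 : i ≤ nev)
    (Xi : Finset ℝ) (hXi : Xi = (Finset.Icc 1 (i - 1)).image lam)
    (hsep : 1 < i → lam (i - 1) ≠ lam i)
    (hcard : Xi.card ≤ M - 1)
    (hgap : i ≤ nev - ℓ → a < lam (i + ℓ))
    (mi : Polynomial ℝ) (hmi : mi = ∏ μ ∈ Xi, (X - C μ))
    (κ : ℝ) (hκ : κ = supAbs (fun t => mi.eval t) a b / |mi.eval (lam i)|)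
    (ε : ℝ)
    (hε : ε = if i ≤ nev - ℓ then
        κ / (Polynomial.Chebyshev.T ℝ ((M - Xi.card - 1 : ℕ) : ℤ)).eval
          (1 + 2 * (lam i - lam (i + ℓ)) / (lam (i + ℓ) - a))
      else 0) :
    ∃ p : Polynomial ℝ, p.natDegree ≤ M - 1 ∧ p.eval (lam i) ≠ 0 ∧
      ∀ j, 1 ≤ j → j ≤ nev → (j < i ∨ i + ℓ ≤ j) →
        |p.eval (lam j)| / |p.eval (lam i)| ≤ ε :=
  exists_poly_ratio_bound_general a b nev ℓ M lam hmono hub hlb i hi1 hi2 Xi hXi hsep hcard hgap mi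
    hmi κ hκ ε hε
end

section
/- For every integer k ≥ 0, (1/(2πi))·∮_{∂Ω} z^k·(zI − A)^{−1} dz = A^k·P, where the integral is taken entrywise over the positively oriented circle ∂Ω. -/
/-! Writing `A = ∑ λⱼ Eⱼ` with `Eⱼ = xⱼ xⱼᵀ` a complete family of orthogonal idempotents, every
polynomial in `A` and the resolvent act diagonally: `Aᵏ = ∑ λⱼᵏ Eⱼ` and
`(zI − A)⁻¹ = ∑ (z − λⱼ)⁻¹ Eⱼ` off the spectrum. The contour integral therefore splits into the
scalar integrals `(2πi)⁻¹ ∮ zᵏ (z − λⱼ)⁻¹ dz`, which by Cauchy's formula and Cauchy–Goursat are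
`λⱼᵏ` when `λⱼ` lies inside the circle, i.e. in `(a, b)`, and `0` when it lies outside. -/

open Complex Metric Matrix Real

section Idempotents

variable {K R ι : Type*} [Fintype ι] {e : ι → R}

theorem OrthogonalIdempotents.sum_smul_mul_sum_smul [CommSemiring K] [Semiring R] [Algebra K R]
    (he : OrthogonalIdempotents e) (μ ν : ι → K) :
    (∑ i, μ i • e i) * ∑ i, ν i • e i = ∑ i, (μ i * ν i) • e i := by
  classical
  simp [Finset.sum_mul, Finset.mul_sum, he.mul_eq, smul_smul, mul_comm]

theorem CompleteOrthogonalIdempotents.sum_smul_pow [CommSemiring K] [Semiring R] [Algebra K R]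
    (he : CompleteOrthogonalIdempotents e) (μ : ι → K) (m : ℕ) :
    (∑ i, μ i • e i) ^ m = ∑ i, μ i ^ m • e i := by
  induction m with
  | zero => simp [he.complete]
  | succ m ih =>
    rw [pow_succ, ih, he.sum_smul_mul_sum_smul]
    simp only [pow_succ]

theorem CompleteOrthogonalIdempotents.smul_one_sub_sum_smul_mul [Field K] [Ring R] [Algebra K R]
    (he : CompleteOrthogonalIdempotents e) (μ : ι → K) {z : K} (hz : ∀ i, z ≠ μ i) :
    (z • 1 - ∑ i, μ i • e i) * ∑ i, (z - μ i)⁻¹ • e i = 1 := by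
  have hdiag : z • (1 : R) - ∑ i, μ i • e i = ∑ i, (z - μ i) • e i := by
    simp only [← he.complete, Finset.smul_sum, sub_smul, Finset.sum_sub_distrib]
  rw [hdiag, he.sum_smul_mul_sum_smul]
  simp [fun i => mul_inv_cancel₀ (sub_ne_zero.mpr (hz i)), he.complete]

theorem CompleteOrthogonalIdempotents.inv_smul_one_sub_sum_smul {m : Type*} [Fintype m]
    [DecidableEq m] [Field K] {e : ι → Matrix m m K} (he : CompleteOrthogonalIdempotents e)
    (μ : ι → K) {z : K} (hz : ∀ i, z ≠ μ i) :
    (z • 1 - ∑ i, μ i • e i)⁻¹ = ∑ i, (z - μ i)⁻¹ • e i :=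
  inv_eq_right_inv (he.smul_one_sub_sum_smul_mul μ hz)

theorem completeOrthogonalIdempotents_vecMulVec {n : Type*} [Fintype n] [DecidableEq n]
    [CommRing K] {x : n → n → K} (hx : ∀ i j, x i ⬝ᵥ x j = if i = j then 1 else 0) :
    CompleteOrthogonalIdempotents fun i => vecMulVec (x i) (x i) := by
  refine ⟨OrthogonalIdempotents.iff_mul_eq.mpr fun i j => ?_, ?_⟩
  · rw [vecMulVec_mul_vecMulVec, hx]
    split_ifs with hij
    · simp [hij]
    · simp
  · set X : Matrix n n K := of x
    have hXXt : X * Xᵀ = 1 := by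
      ext i j
      simpa [X, mul_apply, one_apply, dotProduct] using hx i j
    calc ∑ i, vecMulVec (x i) (x i) = Xᵀ * X := by
          ext i j
          simp [X, Matrix.sum_apply, mul_apply, vecMulVec_apply]
      _ = 1 := mul_eq_one_comm.mp hXXt

end Idempotents

section CauchyIntegral

variable {E : Type*} [NormedAddCommGroup E] [NormedSpace ℂ E] [CompleteSpace E]

theorem Differentiable.two_pi_I_inv_smul_circleIntegral_sub_inv_smul {f : ℂ → E}
    (hf : Differentiable ℂ f) {c w : ℂ} {R : ℝ} (hR : 0 ≤ R) (hw : w ∉ sphere c R) :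
    (2 * π * I : ℂ)⁻¹ • (∮ z in C(c, R), (z - w)⁻¹ • f z) = (ball c R).indicator f w := by
  by_cases hball : w ∈ ball c R
  · rw [Set.indicator_of_mem hball]
    exact hf.diffContOnCl.two_pi_i_inv_smul_circleIntegral_sub_inv_smul hball
  · rw [Set.indicator_of_notMem hball]
    have hclosed : w ∉ closedBall c R := by
      rw [← ball_union_sphere]
      exact fun h => h.elim hball hw
    have hdiff : DifferentiableOn ℂ (fun z => (z - w)⁻¹ • f z) {w}ᶜ := fun z hz =>
      (((differentiableAt_id.sub_const w).inv (sub_ne_zero.mpr hz)).smul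
        (hf z)).differentiableWithinAt
    rw [(hdiff.diffContOnCl_ball fun z hz h => hclosed (h ▸ hz)).circleIntegral_eq_zero hR,
      smul_zero]

theorem CompleteOrthogonalIdempotents.two_pi_I_inv_mul_circleIntegral_resolvent_apply
    {ι m : Type*} [Fintype ι] [Fintype m] [DecidableEq m] {e : ι → Matrix m m ℂ}
    (he : CompleteOrthogonalIdempotents e) {μ : ι → ℂ} {f : ℂ → ℂ} (hf : Differentiable ℂ f)
    {c : ℂ} {R : ℝ} (hR : 0 ≤ R) (hμ : ∀ i, μ i ∉ sphere c R) (r s : m) :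
    (2 * π * I)⁻¹ * (∮ z in C(c, R), f z * (z • 1 - ∑ i, μ i • e i)⁻¹ r s) =
      (∑ i, (ball c R).indicator f (μ i) • e i) r s := by
  have hne : ∀ i, ∀ z ∈ sphere c R, z - μ i ≠ 0 := fun i z hz h =>
    hμ i (sub_eq_zero.mp h ▸ hz)
  have hres : Set.EqOn (fun z => f z * (z • 1 - ∑ i, μ i • e i)⁻¹ r s)
      (fun z => ∑ i, e i r s * ((z - μ i)⁻¹ • f z)) (sphere c R) := by
    intro z hz
    simp only [he.inv_smul_one_sub_sum_smul μ fun i => sub_ne_zero.mp (hne i z hz),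
      Matrix.sum_apply, Matrix.smul_apply, smul_eq_mul, Finset.mul_sum]
    exact Finset.sum_congr rfl fun i _ => by ring
  have hint : ∀ i, CircleIntegrable (fun z => e i r s * ((z - μ i)⁻¹ • f z)) c R := fun i =>
    ContinuousOn.circleIntegrable hR <| continuousOn_const.mul <|
      ((continuousOn_id.sub continuousOn_const).inv₀ (hne i)).smul hf.continuous.continuousOn
  rw [circleIntegral.integral_congr hR hres, circleIntegral.integral_fun_sum fun i _ => hint i,
    Finset.mul_sum, Matrix.sum_apply]
  refine Finset.sum_congr rfl fun i _ => ?_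
  rw [circleIntegral.integral_const_mul, mul_left_comm, ← smul_eq_mul (2 * π * I : ℂ)⁻¹,
    hf.two_pi_I_inv_smul_circleIntegral_sub_inv_smul hR (hμ i), Matrix.smul_apply,
    smul_eq_mul, mul_comm]

end CauchyIntegral

theorem ofReal_mem_ball_midpoint_iff {a b t : ℝ} :
    (t : ℂ) ∈ ball (((a + b) / 2 : ℝ) : ℂ) ((b - a) / 2) ↔ t ∈ Set.Ioo a b := by
  rw [Real.Ioo_eq_ball, mem_ball, mem_ball, isometry_ofReal.dist_eq]

theorem ofReal_notMem_sphere_midpoint {a b t : ℝ} (ha : t ≠ a) (hb : t ≠ b) :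
    (t : ℂ) ∉ sphere (((a + b) / 2 : ℝ) : ℂ) ((b - a) / 2) := by
  rw [mem_sphere, isometry_ofReal.dist_eq, Real.dist_eq]
  intro h
  rcases abs_cases (t - (a + b) / 2) with ⟨habs, -⟩ | ⟨habs, -⟩
  · exact hb (by linarith)
  · exact ha (by linarith)

/-- let `A` be real symmetric with spectral decomposition
`A = Σ_j λ_j x_j x_jᵀ` (`x_j` orthonormal), no eigenvalue equal to `a` or `b`,
`∂Ω` the positively oriented circle with center `(a+b)/2` and radius `(b−a)/2`, and
`P = Σ_{λ_j ∈ (a,b)} x_j x_jᵀ` the associated spectral projector. Then for every `k ≥ 0`,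
`(1/(2πi))·∮_{∂Ω} z^k (zI − A)^{−1} dz = A^k P`, entrywise. -/
theorem contour_integral_moment (n : ℕ) (A : Matrix (Fin n) (Fin n) ℝ)
    (lam : Fin n → ℝ) (x : Fin n → Fin n → ℝ)
    (hspec : A = ∑ j, lam j • Matrix.vecMulVec (x j) (x j))
    (horth : ∀ j k, dotProduct (x j) (x k) = if j = k then (1 : ℝ) else 0)
    (a b : ℝ) (hab : a < b) (hnoeig : ∀ j, lam j ≠ a ∧ lam j ≠ b) (k : ℕ) :
    ∀ r c : Fin n,
      (1 / (2 * (Real.pi : ℂ) * Complex.I)) *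
          (∮ z in C((((a + b) / 2 : ℝ) : ℂ), (b - a) / 2),
            z ^ k * ((z • (1 : Matrix (Fin n) (Fin n) ℂ) -
              A.map (fun t => (t : ℂ)))⁻¹ r c)) =
        ((A.map (fun t => (t : ℂ))) ^ k *
          ((∑ j ∈ Finset.univ.filter fun j => lam j ∈ Set.Ioo a b,
            Matrix.vecMulVec (x j) (x j)).map (fun t => (t : ℂ)))) r c := by
  intro r c
  set e : Fin n → Matrix (Fin n) (Fin n) ℂ := fun j => (vecMulVec (x j) (x j)).map ofReal
  have he : CompleteOrthogonalIdempotents e :=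
    (completeOrthogonalIdempotents_vecMulVec horth).map (ofRealHom.mapMatrix (m := Fin n))
  have hA : A.map ofReal = ∑ j, (lam j : ℂ) • e j := by
    ext
    simp [e, hspec, Matrix.sum_apply]
  have hP : (∑ j ∈ Finset.univ.filter fun j => lam j ∈ Set.Ioo a b,
      vecMulVec (x j) (x j)).map ofReal =
        ∑ j, (if lam j ∈ Set.Ioo a b then 1 else 0 : ℂ) • e j := by
    ext
    simp only [e, Finset.sum_filter, map_apply, Matrix.sum_apply, Matrix.smul_apply, smul_eq_mul]
    push_cast
    exact Finset.sum_congr rfl fun j _ => by split_ifs <;> simp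
  have hR : (0 : ℝ) ≤ (b - a) / 2 := by linarith
  rw [one_div, hA, he.two_pi_I_inv_mul_circleIntegral_resolvent_apply (differentiable_pow k) hR
    fun j => ofReal_notMem_sphere_midpoint (hnoeig j).1 (hnoeig j).2, hP, he.sum_smul_pow,
    he.sum_smul_mul_sum_smul]
  refine congrFun (congrFun (Finset.sum_congr rfl fun j _ => ?_) r) c
  by_cases hj : lam j ∈ Set.Ioo a b
  · rw [Set.indicator_of_mem (ofReal_mem_ball_midpoint_iff.mpr hj), if_pos hj, mul_one]
  · rw [Set.indicator_of_notMem (mt ofReal_mem_ball_midpoint_iff.mp hj), if_neg hj, mul_zero]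
end

section
/- For every integer M ≥ 2, the degree-(M−1) Chebyshev polynomial of the first kind satisfies T_{M−1}((M+1)/(M−1)) ≥ 3; equivalently, 1/T_{M−1}((M+1)/(M−1)) ≤ 1/3. -/
/-!
For `x ≥ 1` the three-term recurrence `T_{n+2} = 2x T_{n+1} - T_n` keeps `T_n(x) ≥ 0` and
`T_{n+1}(x) ≥ x T_n(x)`, so `T_n(x) ≥ x ^ n ≥ 1 + n (x - 1)` by Bernoulli's inequality.
With `n = M - 1` the point `(M + 1)/(M - 1)` is `1 + 2/n`, where this lower bound is `3`.
-/

namespace Polynomial.Chebyshev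

lemma T_eval_nat_add_two {R : Type*} [CommRing R] (n : ℕ) (x : R) :
    (T R (n + 2 : ℕ)).eval x = 2 * x * (T R (n + 1 : ℕ)).eval x - (T R n).eval x := by
  push_cast
  simp [mul_assoc]

lemma T_eval_nonneg_and_mul_le_T_eval_succ {x : ℝ} (hx : 1 ≤ x) (n : ℕ) :
    0 ≤ (T ℝ n).eval x ∧ x * (T ℝ n).eval x ≤ (T ℝ (n + 1 : ℕ)).eval x := by
  induction n with
  | zero => simp
  | succ n ih =>
    obtain ⟨hTn, hstep⟩ := ih
    have hTsucc : 0 ≤ (T ℝ (n + 1 : ℕ)).eval x := by nlinarith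
    refine ⟨hTsucc, ?_⟩
    rw [T_eval_nat_add_two]
    nlinarith

lemma pow_le_T_eval {x : ℝ} (hx : 1 ≤ x) (n : ℕ) : x ^ n ≤ (T ℝ n).eval x := by
  induction n with
  | zero => simp
  | succ n ih =>
    calc x ^ (n + 1) = x * x ^ n := pow_succ' x n
      _ ≤ x * (T ℝ n).eval x := by gcongr
      _ ≤ (T ℝ (n + 1 : ℕ)).eval x := (T_eval_nonneg_and_mul_le_T_eval_succ hx n).2

lemma one_add_mul_sub_one_le_T_eval {x : ℝ} (hx : 1 ≤ x) (n : ℕ) :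
    1 + n * (x - 1) ≤ (T ℝ n).eval x :=
  calc 1 + n * (x - 1) ≤ (1 + (x - 1)) ^ n := one_add_mul_le_pow (by linarith) n
    _ = x ^ n := by rw [add_sub_cancel]
    _ ≤ (T ℝ n).eval x := pow_le_T_eval hx n

lemma three_le_T_eval_one_add_two_div {n : ℕ} (hn : n ≠ 0) :
    3 ≤ (T ℝ n).eval (1 + 2 / (n : ℝ)) := by
  have hn' : (n : ℝ) ≠ 0 := Nat.cast_ne_zero.mpr hn
  calc (3 : ℝ) = 1 + n * (1 + 2 / n - 1) := by field_simp; ring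
    _ ≤ (T ℝ n).eval (1 + 2 / (n : ℝ)) :=
      one_add_mul_sub_one_le_T_eval (le_add_of_nonneg_right (by positivity)) n

end Polynomial.Chebyshev

open Polynomial.Chebyshev

/-- for every integer `M ≥ 2`, the degree-`(M−1)` Chebyshev polynomial of the
first kind satisfies `T_{M−1}((M+1)/(M−1)) ≥ 3`; equivalently,
`1/T_{M−1}((M+1)/(M−1)) ≤ 1/3`. -/
theorem chebyshev_eval_ratio_ge_three (M : ℕ) (hM : 2 ≤ M) :
    3 ≤ (Polynomial.Chebyshev.T ℝ (M - 1 : ℕ)).eval (((M : ℝ) + 1) / ((M : ℝ) - 1)) ∧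
    1 / (Polynomial.Chebyshev.T ℝ (M - 1 : ℕ)).eval (((M : ℝ) + 1) / ((M : ℝ) - 1)) ≤ 1 / 3 := by
  have hpoint : ((M : ℝ) + 1) / ((M : ℝ) - 1) = 1 + 2 / ((M - 1 : ℕ) : ℝ) := by
    have hM' : (M : ℝ) - 1 ≠ 0 := by
      have : (2 : ℝ) ≤ M := by exact_mod_cast hM
      linarith
    rw [Nat.cast_sub (by omega), Nat.cast_one]
    field_simp
    ring
  have hT : 3 ≤ (T ℝ (M - 1 : ℕ)).eval (((M : ℝ) + 1) / ((M : ℝ) - 1)) :=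
    hpoint ▸ three_le_T_eval_one_add_two_div (by omega)
  exact ⟨hT, one_div_le_one_div_of_le (by norm_num) hT⟩
end
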